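/- arXiv:1711.04902 — 3 statements merged into one kernel-verified Lean document; each statement's English description precedes it below -/
import Mathlib

section
/- Full TPE decryption correctness: with x', y' ∈ R^{n+3} as in the TPE construction (x' = (βx₁,…,βxₙ,−βθ,r_x,0) permuted by a permutation π to x'', similarly y'' = π applied to y' = (αy₁,…,αyₙ,α,0,r_y)), let X = diag(x''), Y = diag(y''), let S_x, S_y be lower triangular matrices with unit diagonal, let M₁, M₂ be invertible (n+3)×(n+3) matrices, C_x = M₁ S_x X M₂ and T_y = M₂⁻¹ Y S_y M₁⁻¹. Then Tr(C_x T_y) = αβ(∑ᵢ xᵢ yᵢ − θ). -/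
open Matrix

lemma tri_diag_trace {m : ℕ} (Sx Sy : Matrix (Fin m) (Fin m) ℝ) (d : Fin m → ℝ)
    (hSx : ∀ i j : Fin m, i < j → Sx i j = 0) (hSxd : ∀ i, Sx i i = 1)
    (hSy : ∀ i j : Fin m, i < j → Sy i j = 0) (hSyd : ∀ i, Sy i i = 1) :
    Matrix.trace (Sx * Matrix.diagonal d * Sy) = ∑ i, d i := by
  rw [Matrix.mul_assoc]
  unfold Matrix.trace
  apply Finset.sum_congr rfl
  intro i _
  rw [Matrix.diag_apply, Matrix.mul_apply]
  simp only [Matrix.diagonal_mul]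
  rw [Finset.sum_eq_single i]
  · rw [hSxd, hSyd]; ring
  · intro j _ hji
    rcases lt_or_gt_of_ne hji with h | h
    · rw [hSy j i h]; ring
    · rw [hSx i j h]; ring
  · intro h; exact absurd (Finset.mem_univ i) h

theorem tpe_decryption_correctness {n : ℕ} (x y : Fin n → ℝ) (θ α β rx ry : ℝ)
    (hα : 0 < α) (hβ : 0 < β) (π : Equiv.Perm (Fin (n + 3)))
    (Sx Sy M₁ M₂ : Matrix (Fin (n + 3)) (Fin (n + 3)) ℝ)
    [Invertible M₁] [Invertible M₂]
    (hSx : ∀ i j : Fin (n + 3), i < j → Sx i j = 0) (hSxd : ∀ i, Sx i i = 1)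
    (hSy : ∀ i j : Fin (n + 3), i < j → Sy i j = 0) (hSyd : ∀ i, Sy i i = 1) :
    let x' : Fin (n + 3) → ℝ := Fin.append (fun i => β * x i) ![-(β * θ), rx, 0]
    let y' : Fin (n + 3) → ℝ := Fin.append (fun i => α * y i) ![α, 0, ry]
    let X := Matrix.diagonal (fun i => x' (π i))
    let Y := Matrix.diagonal (fun i => y' (π i))
    let Cx := M₁ * Sx * X * M₂
    let Ty := M₂⁻¹ * Y * Sy * M₁⁻¹
    Matrix.trace (Cx * Ty) = α * β * ((∑ i, x i * y i) - θ) := by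
  intro x' y' X Y Cx Ty
  have h2 : M₂ * M₂⁻¹ = 1 := mul_inv_of_invertible M₂
  have h1 : M₁⁻¹ * M₁ = 1 := inv_mul_of_invertible M₁
  have hconj : Cx * Ty = M₁ * (Sx * (X * Y) * Sy) * M₁⁻¹ := by
    show M₁ * Sx * X * M₂ * (M₂⁻¹ * Y * Sy * M₁⁻¹) = _
    rw [show M₁ * Sx * X * M₂ * (M₂⁻¹ * Y * Sy * M₁⁻¹)
        = M₁ * Sx * X * (M₂ * M₂⁻¹) * Y * Sy * M₁⁻¹ by
      simp only [Matrix.mul_assoc], h2, Matrix.mul_one]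
    simp only [Matrix.mul_assoc]
  rw [hconj, Matrix.trace_mul_cycle, h1, Matrix.one_mul]
  have hXY : X * Y = Matrix.diagonal (fun i => x' (π i) * y' (π i)) := by
    rw [Matrix.diagonal_mul_diagonal]
  rw [hXY, tri_diag_trace Sx Sy _ hSx hSxd hSy hSyd]
  rw [Equiv.sum_comp π (fun i => x' i * y' i)]
  rw [Fin.sum_univ_add (f := fun i => x' i * y' i)]
  have hL : ∀ i : Fin n, x' (Fin.castAdd 3 i) * y' (Fin.castAdd 3 i)
      = α * β * (x i * y i) := by
    intro i
    show Fin.append _ _ _ * Fin.append _ _ _ = _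
    rw [Fin.append_left, Fin.append_left]; ring
  have hR : ∀ i : Fin 3, x' (Fin.natAdd n i) * y' (Fin.natAdd n i)
      = if i = 0 then -(β * θ) * α else 0 := by
    intro i
    show Fin.append _ _ _ * Fin.append _ _ _ = _
    rw [Fin.append_right, Fin.append_right]
    fin_cases i <;> simp
  simp only [hL, hR]
  rw [Fin.sum_univ_three]
  rw [if_pos rfl, if_neg (show (1 : Fin 3) ≠ 0 by decide),
    if_neg (show (2 : Fin 3) ≠ 0 by decide)]
  rw [mul_sub, Finset.mul_sum]
  ring_nf
end

section
/- With C_x = M₁ S_x X M₂ and T_y = M₂⁻¹ Y S_y M₁⁻¹ as in the TPE construction (X, Y diagonal; S_x, S_y unit lower triangular; M₁, M₂ invertible), and assuming α, β > 0: Tr(C_x T_y) ≤ 0 if and only if x ∘ y ≤ θ, where x, y are the original templates and the encodings are as in the TPE scheme. -/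
open Matrix

theorem tpe_decryption_iff {n : ℕ} (x y : Fin n → ℝ) (θ α β rx ry : ℝ)
    (hα : 0 < α) (hβ : 0 < β) (π : Equiv.Perm (Fin (n + 3)))
    (Sx Sy M₁ M₂ : Matrix (Fin (n + 3)) (Fin (n + 3)) ℝ)
    [Invertible M₁] [Invertible M₂]
    (hSx : ∀ i j : Fin (n + 3), i < j → Sx i j = 0) (hSxd : ∀ i, Sx i i = 1)
    (hSy : ∀ i j : Fin (n + 3), i < j → Sy i j = 0) (hSyd : ∀ i, Sy i i = 1) :
    let x' : Fin (n + 3) → ℝ := Fin.append (fun i => β * x i) ![-(β * θ), rx, 0]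
    let y' : Fin (n + 3) → ℝ := Fin.append (fun i => α * y i) ![α, 0, ry]
    let X := Matrix.diagonal (fun i => x' (π i))
    let Y := Matrix.diagonal (fun i => y' (π i))
    let Cx := M₁ * Sx * X * M₂
    let Ty := M₂⁻¹ * Y * Sy * M₁⁻¹
    Matrix.trace (Cx * Ty) ≤ 0 ↔ (∑ i, x i * y i) ≤ θ := by
  intro x' y' X Y Cx Ty
  have key : Matrix.trace (Cx * Ty) = α * β * ((∑ i, x i * y i) - θ) := by
    have h1 : Cx * Ty = M₁ * (Sx * (Matrix.diagonal fun i => x' (π i) * y' (π i)) * Sy) * M₁⁻¹ := by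
      show M₁ * Sx * X * M₂ * (M₂⁻¹ * Y * Sy * M₁⁻¹) = _
      have hXY : X * Y = Matrix.diagonal fun i => x' (π i) * y' (π i) := by
        simp [X, Y, Matrix.diagonal_mul_diagonal]
      rw [← hXY]
      have : M₂ * (M₂⁻¹ * Y * Sy * M₁⁻¹) = Y * Sy * M₁⁻¹ := by
        rw [show M₂⁻¹ * Y * Sy * M₁⁻¹ = M₂⁻¹ * (Y * Sy * M₁⁻¹) by
            simp only [Matrix.mul_assoc],
          Matrix.mul_inv_cancel_left_of_invertible]
      simp only [Matrix.mul_assoc] at this ⊢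
      rw [this]
    rw [h1, Matrix.trace_mul_cycle, ← Matrix.mul_assoc, Matrix.inv_mul_of_invertible,
      Matrix.one_mul]
    have h2 : Matrix.trace (Sx * (Matrix.diagonal fun i => x' (π i) * y' (π i)) * Sy)
        = ∑ i, x' (π i) * y' (π i) := by
      rw [Matrix.trace]
      rw [show (∑ i, x' (π i) * y' (π i)) = ∑ i, Matrix.diag
        (Sx * (Matrix.diagonal fun i => x' (π i) * y' (π i)) * Sy) i from ?_]
      apply Finset.sum_congr rfl
      intro i _
      rw [Matrix.diag_apply, Matrix.mul_apply]
      rw [Finset.sum_eq_single i]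
      · rw [Matrix.mul_diagonal, hSxd, hSyd, one_mul, mul_one]
      · intro j _ hj
        rcases lt_or_gt_of_ne hj with h | h
        · rw [hSy j i h, mul_zero]
        · rw [Matrix.mul_diagonal, hSx i j h, zero_mul, zero_mul]
      · intro h; exact absurd (Finset.mem_univ i) h
    rw [h2]
    have h3 : (∑ i, x' (π i) * y' (π i)) = ∑ i, x' i * y' i :=
      Fintype.sum_equiv π _ _ (fun i => rfl)
    rw [h3]
    have h4 : (∑ i : Fin (n + 3), x' i * y' i)
        = ∑ i : Fin n, x' (Fin.castAdd 3 i) * y' (Fin.castAdd 3 i)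
          + ∑ i : Fin 3, x' (Fin.natAdd n i) * y' (Fin.natAdd n i) :=
      Fin.sum_univ_add _
    rw [h4]
    simp only [x', y', Fin.append_left, Fin.append_right, Fin.sum_univ_three]
    simp [Finset.mul_sum]
    ring_nf
    congr 1
    rw [Finset.mul_sum]
    apply Finset.sum_congr rfl
    intro i _
    ring
  rw [key]
  have hab : 0 < α * β := mul_pos hα hβ
  constructor
  · intro h; nlinarith
  · intro h; nlinarith
end

section
/- Randomized Euclidean encoding: for x, y ∈ ℝⁿ, θ ∈ ℝ, and α, β > 0, r_x, r_y ∈ ℝ, let x' = (2βx₁,…,2βxₙ, −β∑xᵢ², β, βθ², r_x, 0) and y' = (αy₁,…,αyₙ, α, −α∑yᵢ², α, 0, r_y) in ℝ^{n+5}. Then x' ∘ y' = αβ(θ² − d_E²(x,y)), hence x' ∘ y' ≥ 0 if and only if d_E(x,y) ≤ |θ|. -/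
theorem euclid_randomized_encoding {n : ℕ} (x y : Fin n → ℝ) (θ α β rx ry : ℝ)
    (hα : 0 < α) (hβ : 0 < β) :
    let x' : Fin (n + 5) → ℝ :=
      Fin.append (fun i => 2 * β * x i) ![-(β * ∑ i, x i ^ 2), β, β * θ ^ 2, rx, 0]
    let y' : Fin (n + 5) → ℝ :=
      Fin.append (fun i => α * y i) ![α, -(α * ∑ i, y i ^ 2), α, 0, ry]
    (∑ j, x' j * y' j) = α * β * (θ ^ 2 - ∑ i, (x i - y i) ^ 2) ∧
      (0 ≤ ∑ j, x' j * y' j ↔ Real.sqrt (∑ i, (x i - y i) ^ 2) ≤ |θ|) := by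
  intro x' y'
  have h1 : ∑ i, 2 * β * x i * (α * y i) = 2 * α * β * ∑ i, x i * y i := by
    rw [Finset.mul_sum]; exact Finset.sum_congr rfl fun i _ => by ring
  have h2 : ∑ i, (x i - y i) ^ 2 = ∑ i, x i ^ 2 - 2 * ∑ i, x i * y i + ∑ i, y i ^ 2 := by
    simp [sub_sq, Finset.sum_add_distrib, Finset.sum_sub_distrib, Finset.mul_sum]
    exact Finset.sum_congr rfl fun i _ => by ring
  have key : (∑ j, x' j * y' j) = α * β * (θ ^ 2 - ∑ i, (x i - y i) ^ 2) := by
    have : (∑ j, x' j * y' j) = (∑ i, 2 * β * x i * (α * y i)) +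
        (-(β * ∑ i, x i ^ 2) * α + β * -(α * ∑ i, y i ^ 2) + β * θ ^ 2 * α + rx * 0 + 0 * ry) := by
      simp only [x', y', Fin.sum_univ_add, Fin.append_left, Fin.append_right, Fin.sum_univ_five]
      simp [Matrix.cons_val_zero, Matrix.cons_val_one]
    rw [this, h1, h2]; ring
  refine ⟨key, ?_⟩
  rw [key]
  have hd : 0 ≤ ∑ i, (x i - y i) ^ 2 := Finset.sum_nonneg fun i _ => sq_nonneg _
  have hab : 0 < α * β := mul_pos hα hβ
  constructor
  · intro h
    have h2' : ∑ i, (x i - y i) ^ 2 ≤ θ ^ 2 := by nlinarith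
    calc Real.sqrt (∑ i, (x i - y i) ^ 2) ≤ Real.sqrt (θ ^ 2) := Real.sqrt_le_sqrt h2'
      _ = |θ| := Real.sqrt_sq_eq_abs θ
  · intro h
    have h2' : ∑ i, (x i - y i) ^ 2 ≤ θ ^ 2 := by
      have := mul_self_le_mul_self (Real.sqrt_nonneg (∑ i, (x i - y i) ^ 2)) h
      rw [Real.mul_self_sqrt hd] at this
      calc ∑ i, (x i - y i) ^ 2 ≤ |θ| * |θ| := this
        _ = θ ^ 2 := by rw [abs_mul_abs_self]; ring
    nlinarith
end
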